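/- Let I₁, …, I₉ be the standard Spin(9)-generating self-adjoint anticommuting involutions of R¹⁶ = O², and for a point B = (x, y) ∈ S¹⁵ consider the nine vectors I₁B, …, I₉B. Then B = Σ_α λ_α I_α B where λ₁ = 2⟨x, y⟩, λ_{k+1} = −2⟨x, R_{u_k} y⟩ for the seven imaginary units u_k, and λ₉ = |x|² − |y|². In particular B lies in the linear span of I₁B, …, I₉B. -/

import Mathlib

/-!
For every `B = (x, y)` one has `Σ_α ⟨B, I_α B⟩ I_α B = |B|² B`. The first component is
`2 (⟨x, y⟩ y + Σ_k ⟨x, y u_k⟩ y u_k) + (|x|² − |y|²) x`. Left multiplication by `y` has adjoint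
left multiplication by `ȳ` and satisfies `y (ȳ w) = |y|² w`, so `y, y u₁, …, y u₇` is an orthogonal
basis of vectors of length `|y|` and the bracket equals `|y|² x` by Parseval. Since each `R_{u_k}`
is skew-adjoint, the second component reduces in the same way to the basis `x, x u₁, …, x u₇`.
-/

noncomputable section

/-- The octonions, as the Cayley–Dickson double of the quaternions. -/
abbrev Octo := Quaternion ℝ × Quaternion ℝ

/-- Cayley–Dickson multiplication:
`(h₁ + h₂e)(h₁' + h₂'e) = (h₁h₁' − conj(h₂')h₂) + (h₂·conj(h₁') + h₂'h₁)e`. -/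
def omul (x y : Octo) : Octo :=
  (x.1 * y.1 - star y.2 * x.2, x.2 * star y.1 + y.2 * x.1)

/-- Octonion conjugation: `conj (h₁ + h₂e) = conj h₁ − h₂ e`. -/
def oconj (x : Octo) : Octo := (star x.1, -x.2)

/-- The associator `[x, x', x''] = (xx')x'' − x(x'x'')`. -/
def oassoc (x y z : Octo) : Octo := omul (omul x y) z - omul x (omul y z)

/-- The standard Euclidean inner product on the octonions. -/
def oinner (x y : Octo) : ℝ := (x.1 * star y.1).re + (x.2 * star y.2).re

/-- The standard Euclidean inner product on `O² = ℝ¹⁶`. -/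
def pinner (p q : Octo × Octo) : ℝ := oinner p.1 q.1 + oinner p.2 q.2

/-- The seven imaginary unit octonions `i, j, k, e, f, g, h`. -/
def octUnit : Fin 7 → Octo
  | 0 => ((⟨0, 1, 0, 0⟩ : Quaternion ℝ), 0)
  | 1 => ((⟨0, 0, 1, 0⟩ : Quaternion ℝ), 0)
  | 2 => ((⟨0, 0, 0, 1⟩ : Quaternion ℝ), 0)
  | 3 => (0, (1 : Quaternion ℝ))
  | 4 => (0, (⟨0, 1, 0, 0⟩ : Quaternion ℝ))
  | 5 => (0, (⟨0, 0, 1, 0⟩ : Quaternion ℝ))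
  | 6 => (0, (⟨0, 0, 0, 1⟩ : Quaternion ℝ))

/-- Right multiplication `R_u : O → O`, `x ↦ xu`. -/
def Rmul (u : Octo) (x : Octo) : Octo := omul x u

/-- The nine standard `Spin(9)` endomorphisms of `O² = ℝ¹⁶`:
`I₁ = [[0,Id],[Id,0]]`, `I_{k+1} = [[0,−R_{u_k}],[R_{u_k},0]]` for the seven
imaginary units `u_k`, and `I₉ = [[Id,0],[0,−Id]]`. -/
def Ifun (α : Fin 9) (p : Octo × Octo) : Octo × Octo :=
  if h0 : α.val = 0 then (p.2, p.1)
  else if h8 : α.val = 8 then (p.1, -p.2)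
  else
    (-(Rmul (octUnit ⟨α.val - 1, by have := α.isLt; omega⟩) p.2),
      Rmul (octUnit ⟨α.val - 1, by have := α.isLt; omega⟩) p.1)

lemma oinner_comm (x y : Octo) : oinner x y = oinner y x := by
  simp only [oinner, Quaternion.re_mul, Quaternion.re_star, Quaternion.imI_star,
    Quaternion.imJ_star, Quaternion.imK_star]
  ring

lemma oinner_omul_left (z x u : Octo) : oinner x (omul z u) = oinner (omul (oconj z) x) u := by
  simp [oinner, omul, oconj]
  ring

lemma oinner_omul_eq_neg_of_re_eq_zero (x y : Octo) {u : Octo} (hu : u.1.re = 0) :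
    oinner x (omul y u) = -oinner y (omul x u) := by
  simp [oinner, omul, hu]
  ring

lemma omul_oconj_omul (z w : Octo) : omul z (omul (oconj z) w) = oinner z z • w := by
  ext <;> simp [oinner, omul, oconj] <;> ring

-- `(1, 0)` is the octonion unit; `(1 : Octo)` is `(1, 1)` in the product ring.
lemma omul_one_zero (z : Octo) : omul z (1, 0) = z := by
  ext <;> simp [omul]

@[simps]
def omulLeft (z : Octo) : Octo →ₗ[ℝ] Octo where
  toFun := omul z
  map_add' a b := by
    simp only [omul, Prod.fst_add, Prod.snd_add, star_add, mul_add, add_mul, Prod.mk_add_mk]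
    congr 1 <;> abel
  map_smul' c a := by
    simp only [omul, Prod.smul_fst, Prod.smul_snd, Quaternion.star_smul, mul_smul_comm,
      smul_mul_assoc, smul_sub, smul_add, Prod.smul_mk, RingHom.id_apply]

lemma octUnit_fst_re (k : Fin 7) : (octUnit k).1.re = 0 := by
  fin_cases k <;> rfl

open scoped Quaternion in
lemma sum_oinner_octUnit_smul (w : Octo) :
    oinner w (1, 0) • (1, 0) + ∑ k, oinner w (octUnit k) • octUnit k = w := by
  rw [Fin.sum_univ_seven]
  ext <;> simp [oinner] <;> simp [octUnit]

lemma sum_oinner_omul_octUnit_smul (z w : Octo) :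
    oinner w z • z + ∑ k, oinner w (omul z (octUnit k)) • omul z (octUnit k) = oinner z z • w := by
  have h := congrArg (omulLeft z) (sum_oinner_octUnit_smul (omul (oconj z) w))
  simp only [map_add, map_sum, map_smul, omulLeft_apply, omul_one_zero, omul_oconj_omul] at h
  simpa only [← oinner_omul_left, omul_one_zero] using h

lemma Ifun_zero (p : Octo × Octo) : Ifun 0 p = (p.2, p.1) := rfl

lemma Ifun_eight (p : Octo × Octo) : Ifun 8 p = (p.1, -p.2) := rfl

lemma Ifun_succ_castSucc (k : Fin 7) (p : Octo × Octo) :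
    Ifun k.succ.castSucc p = (-omul p.2 (octUnit k), omul p.1 (octUnit k)) := by
  have hk : (k.succ.castSucc : Fin 9).val = k.val + 1 := rfl
  rw [Ifun, dif_neg (by omega), dif_neg (by omega)]
  rfl

theorem sum_smul_Ifun_eq_pinner_smul (x y : Octo) :
    (2 * oinner x y) • Ifun 0 (x, y)
      + (∑ k : Fin 7, (-(2 * oinner x (Rmul (octUnit k) y))) • Ifun k.succ.castSucc (x, y))
      + (oinner x x - oinner y y) • Ifun 8 (x, y) = pinner (x, y) (x, y) • (x, y) := by
  have hx := sum_oinner_omul_octUnit_smul y x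
  have hy := sum_oinner_omul_octUnit_smul x y
  simp only [Ifun_zero, Ifun_eight, Ifun_succ_castSucc, Rmul, pinner]
  refine Prod.ext ?_ ?_
  · simp only [Prod.fst_add, Prod.fst_sum, Prod.smul_fst, neg_smul_neg, mul_smul, ← Finset.smul_sum]
    linear_combination (norm := module) (2 : ℝ) • hx
  · simp only [Prod.snd_add, Prod.snd_sum, Prod.smul_snd,
      oinner_omul_eq_neg_of_re_eq_zero x y (octUnit_fst_re _), mul_neg, neg_neg, mul_smul,
      ← Finset.smul_sum, oinner_comm x y]
    linear_combination (norm := module) (2 : ℝ) • hy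

/-- For `B = (x,y) ∈ S¹⁵`, one has `B = Σ_α λ_α I_α B` with `λ₁ = 2⟨x,y⟩`,
`λ_{k+1} = −2⟨x, R_{u_k} y⟩`, `λ₉ = |x|² − |y|²`; in particular `B` lies in the
span of `I₁B, …, I₉B`. -/
theorem unitNormal_mem_span (x y : Octo) (hB : pinner (x, y) (x, y) = 1) :
    ((x, y) : Octo × Octo) =
        (2 * oinner x y) • Ifun 0 (x, y)
        + (∑ k : Fin 7,
            (-(2 * oinner x (Rmul (octUnit k) y))) • Ifun k.succ.castSucc (x, y))
        + (oinner x x - oinner y y) • Ifun 8 (x, y) ∧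
      ((x, y) : Octo × Octo) ∈
        Submodule.span ℝ (Set.range fun α : Fin 9 => Ifun α (x, y)) := by
  have hsum := sum_smul_Ifun_eq_pinner_smul x y
  rw [hB, one_smul] at hsum
  refine ⟨hsum.symm, ?_⟩
  set V := Submodule.span ℝ (Set.range fun α : Fin 9 => Ifun α (x, y))
  have mem (α : Fin 9) : Ifun α (x, y) ∈ V := Submodule.subset_span ⟨α, rfl⟩
  rw [← hsum]
  refine Submodule.add_mem _ (Submodule.add_mem _ ?_ ?_) ?_
  · exact Submodule.smul_mem _ _ (mem 0)
  · exact Submodule.sum_mem _ fun k _ => Submodule.smul_mem _ _ (mem _)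
  · exact Submodule.smul_mem _ _ (mem 8)
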